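/- Let Q(X) = X^3 + aX^2 + bX + 1 ∈ ℤ[X] be irreducible with a real root α, |α| > 1, and nonreal roots β, β̄. Then β/β̄ is not a root of unity. -/

import Mathlib

/-!
Since `β^k = β̄^k`, the number `β^k` is real. Writing it as `p + qβ + rβ²` with integers
`p, q, r` (possible because `β` is a root of a monic integer cubic), its imaginary part is
`Im β · (q + 2r Re β)`, so `q + 2r Re β = 0`. If `r = 0`, then `β^k = p` is a nonzero integer,
impossible since `|β|² = 1/|α| < 1`. Otherwise `Re β` is rational, hence so is
`α = -a - 2 Re β`; but a rational root of `X³ + aX² + bX + 1` is an integer unit, so `|α| = 1`.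
-/

open ComplexConjugate

theorem exists_pow_eq_of_cubic {R : Type*} [CommRing R] {a b c : ℤ} {x : R}
    (hx : x ^ 3 + a * x ^ 2 + b * x + c = 0) (n : ℕ) :
    ∃ p q r : ℤ, x ^ n = p + q * x + r * x ^ 2 := by
  induction n with
  | zero => exact ⟨1, 0, 0, by simp⟩
  | succ n ih =>
    obtain ⟨p, q, r, h⟩ := ih
    refine ⟨-c * r, p - b * r, q - a * r, ?_⟩
    push_cast
    linear_combination x * h + (r : R) * hx

open Polynomial in
theorem Rat.abs_eq_one_of_cubic {a b : ℤ} {s : ℚ}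
    (hs : s ^ 3 + a * s ^ 2 + b * s + 1 = 0) : |s| = 1 := by
  have hmonic : (X ^ 3 + C a * X ^ 2 + C b * X + 1 : ℤ[X]).Monic := by monicity!
  obtain ⟨n, rfl⟩ :=
    isInteger_of_is_root_of_monic hmonic (K := ℚ) (r := s) (by simpa using hs)
  have hn : (n : ℚ) * -(n ^ 2 + a * n + b) = 1 := by linear_combination -hs
  have hunit : IsUnit n := .of_mul_eq_one (-(n ^ 2 + a * n + b)) (by exact_mod_cast hn)
  simpa [← Int.cast_abs] using Int.isUnit_iff_abs_eq.mp hunit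

namespace Complex

theorem im_pow_eq_zero_of_div_conj_pow_eq_one {z : ℂ} {k : ℕ} (hz : z ≠ 0)
    (h : (z / conj z) ^ k = 1) : (z ^ k).im = 0 := by
  rw [div_pow, div_eq_one_iff_eq (pow_ne_zero _ ((_root_.map_ne_zero _).mpr hz)),
    ← map_pow] at h
  exact conj_eq_iff_im.mp h.symm

theorem im_add_mul_add_mul_sq (p q r : ℝ) (z : ℂ) :
    ((p : ℂ) + q * z + r * z ^ 2).im = z.im * (q + 2 * r * z.re) := by
  simp [pow_two]
  ring

theorem pow_ne_intCast_of_norm_lt_one {z : ℂ} (hz : z ≠ 0) (hz1 : ‖z‖ < 1) {k : ℕ}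
    (hk : k ≠ 0) (p : ℤ) : z ^ k ≠ p := by
  intro hzp
  have hp : |(p : ℝ)| < 1 :=
    norm_intCast p ▸ hzp ▸ norm_pow z k ▸ pow_lt_one₀ (norm_nonneg z) hz1 hk
  obtain rfl : p = 0 := Int.abs_lt_one_iff.mp (by exact_mod_cast hp)
  exact hz (pow_eq_zero_iff hk |>.mp (by simpa using hzp))

end Complex

section Vieta

variable {a b : ℤ} {α : ℝ} {β : ℂ}

theorem mul_normSq_eq_neg_one_of_cubic_eq
    (hfac : ∀ x : ℂ, x ^ 3 + a * x ^ 2 + b * x + 1 = (x - α) * (x - β) * (x - conj β)) :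
    α * Complex.normSq β = -1 := by
  have : (α : ℂ) * (Complex.normSq β : ℝ) = -1 := by
    rw [← Complex.mul_conj]; linear_combination hfac 0
  exact_mod_cast this

theorem add_two_mul_re_eq_of_cubic_eq
    (hfac : ∀ x : ℂ, x ^ 3 + a * x ^ 2 + b * x + 1 = (x - α) * (x - β) * (x - conj β)) :
    α + 2 * β.re = -a := by
  have : (α : ℂ) + (2 * β.re : ℝ) = -a := by
    rw [← Complex.add_conj]; linear_combination (hfac 1 + hfac (-1)) / 2 - hfac 0
  exact_mod_cast this

end Vieta

open Polynomial in
theorem stmt_2_general (a b : ℤ) (α : ℝ) (β : ℂ)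
    (hα : |α| > 1) (hβ : β.im ≠ 0)
    (hfac : ∀ x : ℂ, x ^ 3 + (a : ℂ) * x ^ 2 + (b : ℂ) * x + 1
      = (x - (α : ℂ)) * (x - β) * (x - (starRingEnd ℂ) β)) :
    ¬ ∃ k : ℕ, 0 < k ∧ (β / (starRingEnd ℂ) β) ^ k = 1 := by
  rintro ⟨k, hk, hroot⟩
  have hβ0 : β ≠ 0 := fun h => hβ (by simp [h])
  have hnorm : ‖β‖ < 1 := by
    rw [← sq_lt_one_iff₀ (norm_nonneg β), ← Complex.normSq_eq_norm_sq]
    cases abs_cases α <;>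
      nlinarith [Complex.normSq_pos.mpr hβ0, mul_normSq_eq_neg_one_of_cubic_eq hfac]
  have hβroot : β ^ 3 + a * β ^ 2 + b * β + ((1 : ℤ) : ℂ) = 0 := by
    rw [Int.cast_one, hfac β]; ring
  obtain ⟨p, q, r, hpqr⟩ := exists_pow_eq_of_cubic hβroot k
  have him : q + 2 * r * β.re = 0 := by
    have := Complex.im_pow_eq_zero_of_div_conj_pow_eq_one hβ0 hroot
    simpa only [hpqr, ← Complex.ofReal_intCast, Complex.im_add_mul_add_mul_sq, mul_eq_zero, hβ,
      false_or] using this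
  rcases eq_or_ne r 0 with rfl | hr
  · obtain rfl : q = 0 := by exact_mod_cast (by simpa using him : (q : ℝ) = 0)
    exact Complex.pow_ne_intCast_of_norm_lt_one hβ0 hnorm hk.ne' p (by simpa using hpqr)
  · set s : ℚ := -a + q / r
    have hαs : α = s := by
      have : (r : ℝ) ≠ 0 := by exact_mod_cast hr
      simp only [s]; push_cast; field_simp
      linear_combination (r : ℝ) * add_two_mul_re_eq_of_cubic_eq hfac - him
    have hαroot : (α : ℂ) ^ 3 + a * (α : ℂ) ^ 2 + b * (α : ℂ) + 1 = 0 := by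
      rw [hfac α]; ring
    rw [hαs] at hαroot hα
    have hs := Rat.abs_eq_one_of_cubic (a := a) (b := b) (by exact_mod_cast hαroot)
    rw [← Rat.cast_abs, hs, Rat.cast_one] at hα
    exact lt_irrefl _ hα

open Polynomial in
/-- If `X^3 + aX^2 + bX + 1 ∈ ℤ[X]` is irreducible, with a real root `α`,
`|α| > 1`, and nonreal roots `β, β̄`, then `β/β̄` is not a root of unity. -/
theorem stmt_2 (a b : ℤ) (α : ℝ) (β : ℂ)
    (hirr : Irreducible (X ^ 3 + C a * X ^ 2 + C b * X + 1 : Polynomial ℤ))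
    (hα : |α| > 1) (hβ : β.im ≠ 0)
    (hfac : ∀ x : ℂ, x ^ 3 + (a : ℂ) * x ^ 2 + (b : ℂ) * x + 1
      = (x - (α : ℂ)) * (x - β) * (x - (starRingEnd ℂ) β)) :
    ¬ ∃ k : ℕ, 0 < k ∧ (β / (starRingEnd ℂ) β) ^ k = 1 :=
  stmt_2_general a b α β hα hβ hfac
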